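/- arXiv:0907.5526 — 3 statements merged into one kernel-verified Lean document; each statement's English description precedes it below -/
import Mathlib

section
/- Let f : A → B be a differential homomorphism of Keigher rings. If f has the going-down property for prime ideals, then f has the going-down property for prime differential ideals: whenever 𝔭' ⊆ 𝔭 are prime differential ideals of A and 𝔮 is a prime differential ideal of B with f⁻¹(𝔮) = 𝔭, there exists a prime differential ideal 𝔮' of B with 𝔮' ⊆ 𝔮 and f⁻¹(𝔮') = 𝔭'. -/
/-!
Common differential-algebra preamble.

A differential ring is a commutative ring `R` equipped with a family of derivations
`δ : ι → Derivation ℤ R R`.  Induced derivations on quotients by differential ideals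
and on localizations are unique (the canonical map is an epimorphism), which justifies
quantifying universally over derivation families commuting with the canonical map.
-/

universe u v

section Preamble

variable {ι : Type*}

/-- An ideal is a *differential ideal* with respect to a family of derivations. -/
def IsDiffIdeal {R : Type*} [CommRing R] (δ : ι → Derivation ℤ R R) (I : Ideal R) : Prop :=
  ∀ i : ι, ∀ x ∈ I, δ i x ∈ I

/-- A *Keigher ring*: the radical of any differential ideal is again differential. -/
def IsKeigher {R : Type*} [CommRing R] (δ : ι → Derivation ℤ R R) : Prop :=
  ∀ I : Ideal R, IsDiffIdeal δ I → IsDiffIdeal δ I.radical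

/-- A ring homomorphism is a *differential homomorphism* if it commutes with the
derivations. -/
def IsDiffHom {A B : Type*} [CommRing A] [CommRing B]
    (δA : ι → Derivation ℤ A A) (δB : ι → Derivation ℤ B B) (f : A →+* B) : Prop :=
  ∀ (i : ι) (a : A), f (δA i a) = δB i (f a)

theorem IsDiffHom.comp {A B C : Type*} [CommRing A] [CommRing B] [CommRing C]
    {δA : ι → Derivation ℤ A A} {δB : ι → Derivation ℤ B B} {δC : ι → Derivation ℤ C C}
    {f : A →+* B} {g : B →+* C} (hf : IsDiffHom δA δB f) (hg : IsDiffHom δB δC g) :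
    IsDiffHom δA δC (g.comp f) := fun i a => by
  simp only [RingHom.comp_apply, hf i a, hg i (f a)]

/-- Iterated application of the derivations along a list of indices. -/
def derivApply {B : Type*} [CommRing B] (δ : ι → Derivation ℤ B B) : List ι → B → B
  | [], b => b
  | i :: l, b => δ i (derivApply δ l b)

/-- `B` is *differentially finitely generated* over `A`: finitely many elements whose
iterated derivatives generate `B` as an `A`-algebra. -/
def IsDiffFG (A : Type*) {B : Type*} [CommRing A] [CommRing B] [Algebra A B]
    (δ : ι → Derivation ℤ B B) : Prop :=
  ∃ s : Finset B,
    Algebra.adjoin A {x : B | ∃ b ∈ s, ∃ l : List ι, derivApply δ l b = x} = ⊤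

/-- A differential ring is *differentially simple* if it is nonzero and its only
differential ideals are `⊥` and `⊤`. -/
def IsDiffSimple {R : Type*} [CommRing R] (δ : ι → Derivation ℤ R R) : Prop :=
  Nontrivial R ∧ ∀ I : Ideal R, IsDiffIdeal δ I → I = ⊥ ∨ I = ⊤

/-- The differential spectrum `Spec^Δ`, as a subspace of the prime spectrum. -/
def DiffSpec {R : Type*} [CommRing R] (δ : ι → Derivation ℤ R R) : Type _ :=
  {p : PrimeSpectrum R // IsDiffIdeal δ p.asIdeal}

instance {R : Type*} [CommRing R] (δ : ι → Derivation ℤ R R) :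
    TopologicalSpace (DiffSpec δ) :=
  inferInstanceAs (TopologicalSpace {p : PrimeSpectrum R // IsDiffIdeal δ p.asIdeal})

/-- The contraction map `f*_Δ : Spec^Δ B → Spec^Δ A` induced by a differential
homomorphism. -/
def diffComap {A B : Type*} [CommRing A] [CommRing B]
    {δA : ι → Derivation ℤ A A} {δB : ι → Derivation ℤ B B} {f : A →+* B}
    (hf : IsDiffHom δA δB f) (q : DiffSpec δB) : DiffSpec δA :=
  ⟨PrimeSpectrum.comap f q.1, fun i x hx => by
    have h : f x ∈ q.1.asIdeal := hx
    have hd := q.2 i (f x) h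
    show f (δA i x) ∈ q.1.asIdeal
    rw [hf i x]
    exact hd⟩

/-- Going-up property for prime ideals. -/
def HasGoingUp {A B : Type*} [CommRing A] [CommRing B] (f : A →+* B) : Prop :=
  ∀ p p' : Ideal A, p.IsPrime → p'.IsPrime → p ≤ p' →
    ∀ q : Ideal B, q.IsPrime → q.comap f = p →
      ∃ q' : Ideal B, q'.IsPrime ∧ q ≤ q' ∧ q'.comap f = p'

/-- Going-down property for prime ideals. -/
def HasGoingDown {A B : Type*} [CommRing A] [CommRing B] (f : A →+* B) : Prop :=
  ∀ p p' : Ideal A, p.IsPrime → p'.IsPrime → p' ≤ p →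
    ∀ q : Ideal B, q.IsPrime → q.comap f = p →
      ∃ q' : Ideal B, q'.IsPrime ∧ q' ≤ q ∧ q'.comap f = p'

/-- Going-up property for prime differential ideals. -/
def HasGoingUpDiff {A B : Type*} [CommRing A] [CommRing B]
    (δA : ι → Derivation ℤ A A) (δB : ι → Derivation ℤ B B) (f : A →+* B) : Prop :=
  ∀ p p' : Ideal A, p.IsPrime → IsDiffIdeal δA p → p'.IsPrime → IsDiffIdeal δA p' → p ≤ p' →
    ∀ q : Ideal B, q.IsPrime → IsDiffIdeal δB q → q.comap f = p →
      ∃ q' : Ideal B, q'.IsPrime ∧ IsDiffIdeal δB q' ∧ q ≤ q' ∧ q'.comap f = p'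

/-- Going-down property for prime differential ideals. -/
def HasGoingDownDiff {A B : Type*} [CommRing A] [CommRing B]
    (δA : ι → Derivation ℤ A A) (δB : ι → Derivation ℤ B B) (f : A →+* B) : Prop :=
  ∀ p p' : Ideal A, p.IsPrime → IsDiffIdeal δA p → p'.IsPrime → IsDiffIdeal δA p' → p' ≤ p →
    ∀ q : Ideal B, q.IsPrime → IsDiffIdeal δB q → q.comap f = p →
      ∃ q' : Ideal B, q'.IsPrime ∧ IsDiffIdeal δB q' ∧ q' ≤ q ∧ q'.comap f = p'

/-- Constructible subsets of a topological space: finite unions of sets of the form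
(open ∩ closed). -/
def IsConstructibleSet {X : Type*} [TopologicalSpace X] (E : Set X) : Prop :=
  ∃ S : Finset (Set X × Set X), (∀ p ∈ S, IsOpen p.1 ∧ IsClosed p.2) ∧
    E = ⋃ p ∈ S, p.1 ∩ p.2

/-- Membership in `SMax^Δ R`: `p` is a prime differential ideal such that the
localization `(R/p)_s` is differentially simple for some `s ∉ p`.  The quotient and
localization are taken with their (unique) induced derivations, hence the universal
quantification over derivation families commuting with the canonical maps. -/
def InSMax {R : Type u} [CommRing R] (δ : ι → Derivation ℤ R R) (p : Ideal R) : Prop :=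
  p.IsPrime ∧ IsDiffIdeal δ p ∧
  ∃ s : R, s ∉ p ∧
    ∀ δq : ι → Derivation ℤ (R ⧸ p) (R ⧸ p),
      IsDiffHom δ δq (Ideal.Quotient.mk p) →
      ∀ (L : Type u) [CommRing L] [Algebra (R ⧸ p) L],
        IsLocalization.Away (Ideal.Quotient.mk p s) L →
        ∀ δl : ι → Derivation ℤ L L,
          IsDiffHom δq δl (algebraMap (R ⧸ p) L) → IsDiffSimple δl

end Preamble

section Aux
variable {ι B : Type*} [CommRing B] (δ : ι → Derivation ℤ B B)

lemma span_isDiffIdeal (s : Set B)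
    (h : ∀ i, ∀ x ∈ s, δ i x ∈ Ideal.span s) : IsDiffIdeal δ (Ideal.span s) := by
  intro i x hx
  induction hx using Submodule.span_induction with
  | mem x hx => exact h i x hx
  | zero => simp
  | add x y hx hy ihx ihy => simpa using Ideal.add_mem _ ihx ihy
  | smul b x hx ih =>
      have hleib : δ i (b * x) = b * δ i x + x * δ i b := by
        simpa [smul_eq_mul, mul_comm] using (δ i).leibniz b x
      have h1 : b * δ i x ∈ Ideal.span s := Ideal.mul_mem_left _ b ih
      have h2 : x * δ i b ∈ Ideal.span s :=
        Ideal.mul_mem_right _ _ hx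
      simpa [smul_eq_mul, hleib] using Ideal.add_mem _ h1 h2

lemma diff_mul_mem (J : Ideal B) (hJd : IsDiffIdeal δ J) (hJr : J.radical = J)
    (i : ι) {x y : B} (h : x * y ∈ J) : δ i x * y ∈ J := by
  have hd : δ i x * y + x * δ i y ∈ J := by
    have heq : δ i x * y + x * δ i y = δ i (x * y) := by
      rw [Derivation.leibniz, smul_eq_mul, smul_eq_mul]; ring
    rw [heq]; exact hJd i _ h
  have hsq : (δ i x * y) ^ 2 ∈ J := by
    have h1 : (δ i x * y) * (δ i x * y + x * δ i y) ∈ J := Ideal.mul_mem_left _ _ hd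
    have h2 : (x * y) * (δ i x * δ i y) ∈ J := Ideal.mul_mem_right _ _ h
    have heq : (δ i x * y) ^ 2
        = (δ i x * y) * (δ i x * y + x * δ i y) - (x * y) * (δ i x * δ i y) := by ring
    rw [heq]; exact Ideal.sub_mem _ h1 h2
  have : δ i x * y ∈ J.radical := ⟨2, hsq⟩
  rwa [hJr] at this

lemma derivApply_mul_mem (J : Ideal B) (hJd : IsDiffIdeal δ J) (hJr : J.radical = J) :
    ∀ l : List ι, ∀ x y : B, x * y ∈ J → derivApply δ l x * y ∈ J := by
  intro l
  induction l with
  | nil => intro x y h; exact h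
  | cons i l ih =>
      intro x y h
      exact diff_mul_mem δ J hJd hJr i (ih x y h)

end Aux

section Aux2
variable {ι B : Type*} [CommRing B] (δ : ι → Derivation ℤ B B)

lemma keigher_maximal_isPrime (hK : IsKeigher δ) (T : Set B)
    (hT1 : (1:B) ∈ T) (hTmul : ∀ a ∈ T, ∀ b ∈ T, a * b ∈ T)
    (J : Ideal B) (hJd : IsDiffIdeal δ J) (hdisj : ∀ t ∈ T, t ∉ J)
    (hmax : ∀ K : Ideal B, IsDiffIdeal δ K → (∀ t ∈ T, t ∉ K) → J ≤ K → K ≤ J) :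
    J.IsPrime := by
  have hTpow : ∀ t ∈ T, ∀ n : ℕ, t ^ n ∈ T := by
    intro t ht n
    induction n with
    | zero => simpa using hT1
    | succ n ih => rw [pow_succ]; exact hTmul _ ih _ ht
  have hJr : J.radical = J := by
    refine le_antisymm (hmax J.radical (hK J hJd) ?_ Ideal.le_radical) Ideal.le_radical
    intro t ht ⟨n, hn⟩
    exact hdisj _ (hTpow t ht n) hn
  constructor
  · intro h1
    exact hdisj 1 hT1 (h1 ▸ Submodule.mem_top)
  · intro a b hab
    by_contra hcon
    push_neg at hcon
    obtain ⟨ha, hb⟩ := hcon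
    -- differential ideal generated by J and the derivatives of a (resp. b)
    set Sa : Set B := ↑J ∪ {z | ∃ l : List ι, derivApply δ l a = z} with hSa
    set Sb : Set B := ↑J ∪ {z | ∃ l : List ι, derivApply δ l b = z} with hSb
    have hSad : IsDiffIdeal δ (Ideal.span Sa) := by
      apply span_isDiffIdeal
      rintro i x (hx | ⟨l, rfl⟩)
      · exact Ideal.subset_span (Or.inl (hJd i x hx))
      · exact Ideal.subset_span (Or.inr ⟨i :: l, rfl⟩)
    have hSbd : IsDiffIdeal δ (Ideal.span Sb) := by
      apply span_isDiffIdeal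
      rintro i x (hx | ⟨l, rfl⟩)
      · exact Ideal.subset_span (Or.inl (hJd i x hx))
      · exact Ideal.subset_span (Or.inr ⟨i :: l, rfl⟩)
    have hJa : J ≤ Ideal.span Sa := fun x hx => Ideal.subset_span (Or.inl hx)
    have hJb : J ≤ Ideal.span Sb := fun x hx => Ideal.subset_span (Or.inl hx)
    have haa : a ∈ Ideal.span Sa := Ideal.subset_span (Or.inr ⟨[], rfl⟩)
    have hbb : b ∈ Ideal.span Sb := Ideal.subset_span (Or.inr ⟨[], rfl⟩)
    -- the radicals must meet T
    have hmeet : ∀ (S : Set B), IsDiffIdeal δ (Ideal.span S) → J ≤ Ideal.span S →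
        ∀ c, c ∈ Ideal.span S → c ∉ J → ∃ s ∈ T, s ∈ (Ideal.span S).radical := by
      intro S hSd hJS c hc hcJ
      by_contra hno
      push_neg at hno
      have := hmax (Ideal.span S).radical (hK _ hSd)
        (fun t ht h => hno t ht h)
        (le_trans hJS Ideal.le_radical)
      exact hcJ (this (Ideal.le_radical hc))
    obtain ⟨s, hsT, hs⟩ := hmeet Sa hSad hJa a haa ha
    obtain ⟨t, htT, ht⟩ := hmeet Sb hSbd hJb b hbb hb
    obtain ⟨n, hn⟩ := hs
    obtain ⟨m, hm⟩ := ht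
    -- product of the two span ideals lies in J
    have hmul : Ideal.span Sa * Ideal.span Sb ≤ J := by
      rw [Ideal.span_mul_span']
      rw [Ideal.span_le]
      rintro _ ⟨u, hu, v, hv, rfl⟩
      rcases hu with hu | ⟨l, rfl⟩
      · exact Ideal.mul_mem_right _ _ hu
      rcases hv with hv | ⟨l', rfl⟩
      · exact Ideal.mul_mem_left _ _ hv
      · -- derivApply l a * derivApply l' b ∈ J
        have h1 : a * derivApply δ l' b ∈ J := by
          have := derivApply_mul_mem δ J hJd hJr l' b a (by rwa [mul_comm] at hab)
          rwa [mul_comm] at this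
        exact derivApply_mul_mem δ J hJd hJr l a (derivApply δ l' b) h1
    have hst : s ^ n * t ^ m ∈ J := hmul (Ideal.mul_mem_mul hn hm)
    have hstJ : s * t ∈ J := by
      have : (s * t) ^ (n + m) ∈ J := by
        have heq : (s * t) ^ (n + m) = (s ^ n * t ^ m) * (s ^ m * t ^ n) := by ring
        rw [heq]; exact Ideal.mul_mem_right _ _ hst
      have : s * t ∈ J.radical := ⟨n + m, this⟩
      rwa [hJr] at this
    exact hdisj _ (hTmul s hsT t htT) hstJ

end Aux2


/-- A differential homomorphism of Keigher rings with the going-down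
property for prime ideals has the going-down property for prime differential ideals. -/
theorem stmt3 {ι A B : Type*} [CommRing A] [CommRing B]
    (δA : ι → Derivation ℤ A A) (δB : ι → Derivation ℤ B B)
    (hKA : IsKeigher δA) (hKB : IsKeigher δB)
    (f : A →+* B) (hf : IsDiffHom δA δB f)
    (hgd : HasGoingDown f) :
    HasGoingDownDiff δA δB f := by
  intro p p' hp hpd hp' hp'd hle q hq hqd hqp
  obtain ⟨q₀, hq₀, hq₀q, hq₀p'⟩ := hgd p p' hp hp' hle q hq hqp
  -- the multiplicative set
  set T : Set B := {z | ∃ a : A, a ∉ p' ∧ ∃ c : B, c ∉ q ∧ z = f a * c} with hT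
  have hT1 : (1:B) ∈ T := ⟨1, fun h => hp'.ne_top (Ideal.eq_top_iff_one _ |>.2 h),
    1, fun h => hq.ne_top (Ideal.eq_top_iff_one _ |>.2 h), by simp⟩
  have hTmul : ∀ x ∈ T, ∀ y ∈ T, x * y ∈ T := by
    rintro _ ⟨a, ha, c, hc, rfl⟩ _ ⟨a', ha', c', hc', rfl⟩
    refine ⟨a * a', fun h => ?_, c * c', fun h => ?_, by rw [map_mul]; ring⟩
    · rcases hp'.mem_or_mem h with h | h
      exacts [ha h, ha' h]
    · rcases hq.mem_or_mem h with h | h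
      exacts [hc h, hc' h]
  -- the base differential ideal
  set I : Ideal B := Ideal.map f p' with hI
  have hId : IsDiffIdeal δB I := by
    rw [hI, Ideal.map, Ideal.span]  -- map is span of image
    apply span_isDiffIdeal
    rintro i _ ⟨a, ha, rfl⟩
    rw [← hf i a]
    exact Ideal.subset_span ⟨δA i a, hp'd i a ha, rfl⟩
  have hIq₀ : I ≤ q₀ := Ideal.map_le_iff_le_comap.2 (hq₀p' ▸ le_rfl)
  have hTq₀ : ∀ t ∈ T, t ∉ q₀ := by
    rintro _ ⟨a, ha, c, hc, rfl⟩ h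
    rcases hq₀.mem_or_mem h with h | h
    · exact ha (by rw [← hq₀p']; exact h)
    · exact hc (hq₀q h)
  have hIdisj : ∀ t ∈ T, t ∉ I := fun t ht h => hTq₀ t ht (hIq₀ h)
  -- Zorn's lemma
  set S : Set (Ideal B) := {K | IsDiffIdeal δB K ∧ I ≤ K ∧ ∀ t ∈ T, t ∉ K} with hS
  have hIS : I ∈ S := ⟨hId, le_rfl, hIdisj⟩
  obtain ⟨J, hIJ, hJS, hJmax⟩ : ∃ J, I ≤ J ∧ Maximal (· ∈ S) J := by
    apply zorn_le_nonempty₀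
    · intro c hc hchain y hy
      refine ⟨sSup c, ⟨?_, ?_, ?_⟩, fun z hz => le_sSup hz⟩
      · intro i x hx
        obtain ⟨K, hKc, hxK⟩ := (Submodule.mem_sSup_of_directed ⟨y, hy⟩
          (hchain.directedOn)).1 hx
        exact le_sSup hKc ((hc hKc).1 i x hxK)
      · exact le_trans (hc hy).2.1 (le_sSup hy)
      · intro t ht htm
        obtain ⟨K, hKc, hxK⟩ := (Submodule.mem_sSup_of_directed ⟨y, hy⟩
          (hchain.directedOn)).1 htm
        exact (hc hKc).2.2 t ht hxK
    · exact hIS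
  obtain ⟨hJd, hIJ', hJdisj⟩ : IsDiffIdeal δB J ∧ I ≤ J ∧ (∀ t ∈ T, t ∉ J) := hJS
  have hJm := hJmax
  have hJprime : J.IsPrime := by
    apply keigher_maximal_isPrime δB hKB T hT1 hTmul J hJd hJdisj
    intro K hKd hKdisj hJK
    exact hJm ⟨hKd, le_trans hIJ' hJK, hKdisj⟩ hJK
  refine ⟨J, hJprime, hJd, ?_, ?_⟩
  · intro x hx
    by_contra hxq
    exact hJdisj x ⟨1, fun h => hp'.ne_top (Ideal.eq_top_iff_one _ |>.2 h), x, hxq, by simp⟩ hx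
  · apply le_antisymm
    · intro a ha
      by_contra hap'
      exact hJdisj (f a) ⟨a, hap', 1, fun h => hq.ne_top (Ideal.eq_top_iff_one _ |>.2 h),
        by simp⟩ ha
    · exact fun a ha => hIJ (Ideal.mem_map_of_mem f ha)
end

section
/- ('Going-up' for differential ideals.) Let f : A → B be a differential homomorphism of Keigher rings such that B is integral over f(A). Then f has the going-up property for prime differential ideals: whenever 𝔭 ⊆ 𝔭' are prime differential ideals of A and 𝔮 is a prime differential ideal of B with f⁻¹(𝔮) = 𝔭, there exists a prime differential ideal 𝔮' ⊇ 𝔮 of B with f⁻¹(𝔮') = 𝔭'. -/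
/-!
Common differential-algebra preamble.

A differential ring is a commutative ring `R` equipped with a family of derivations
`δ : ι → Derivation ℤ R R`.  Induced derivations on quotients by differential ideals
and on localizations are unique (the canonical map is an epimorphism), which justifies
quantifying universally over derivation families commuting with the canonical map.
-/

universe u v

/-!
The extension `q ⊔ f(p')B` is a differential ideal, and by classical going-up it lies in a
prime over `p'`, so it misses the multiplicative set `f(A ∖ p')`. Enlarge it by Zorn to a
differential ideal `m` maximal with this property. In a Keigher ring such an `m` is prime:
it is radical, so its colon ideals `m : b` are again differential, and if `x y ∈ m` with
`x, y ∉ m` then `m : y` meets the set in some `s`, and `m : s` meets it in some `t`, giving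
`t s ∈ m`. Finally `f(p') ⊆ m` and disjointness give `f⁻¹(m) = p'`.
-/

section DiffIdeal

variable {ι R : Type*} [CommRing R] {δ : ι → Derivation ℤ R R}

lemma isDiffIdeal_span {s : Set R} (h : ∀ i, ∀ x ∈ s, δ i x ∈ Ideal.span s) :
    IsDiffIdeal δ (Ideal.span s) := by
  intro i x hx
  induction hx using Submodule.span_induction with
  | mem x hx => exact h i x hx
  | zero => simp
  | add x y _ _ hx hy => rw [map_add]; exact add_mem hx hy
  | smul c x hx ih =>
    rw [smul_eq_mul, Derivation.leibniz, smul_eq_mul, smul_eq_mul]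
    exact add_mem (Ideal.mul_mem_left _ _ ih) (Ideal.mul_mem_right _ _ hx)

lemma isDiffIdeal_sSup_of_directedOn {c : Set (Ideal R)} (hc : ∀ I ∈ c, IsDiffIdeal δ I)
    (hne : c.Nonempty) (hdir : DirectedOn (· ≤ ·) c) : IsDiffIdeal δ (sSup c) := by
  intro i x hx
  obtain ⟨I, hIc, hxI⟩ := (Submodule.mem_sSup_of_directed hne hdir).mp hx
  exact le_sSup hIc (hc I hIc i x hxI)

namespace IsDiffIdeal

lemma sup {I J : Ideal R} (hI : IsDiffIdeal δ I) (hJ : IsDiffIdeal δ J) :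
    IsDiffIdeal δ (I ⊔ J) := by
  intro i x hx
  obtain ⟨y, hy, z, hz, rfl⟩ := Submodule.mem_sup.mp hx
  rw [map_add]
  exact add_mem (Ideal.mem_sup_left (hI i y hy)) (Ideal.mem_sup_right (hJ i z hz))

lemma map {A : Type*} [CommRing A] {δA : ι → Derivation ℤ A A} {f : A →+* R}
    (hf : IsDiffHom δA δ f) {I : Ideal A} (hI : IsDiffIdeal δA I) :
    IsDiffIdeal δ (I.map f) := by
  refine isDiffIdeal_span fun i y ⟨x, hx, hxy⟩ => ?_
  rw [← hxy, ← hf i x]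
  exact Ideal.mem_map_of_mem f (hI i x hx)

lemma mul_derivation_mem {J : Ideal R} (hrad : J.IsRadical) (hJ : IsDiffIdeal δ J)
    {a b : R} (hab : a * b ∈ J) (i : ι) : a * δ i b ∈ J := by
  have hδab : a * δ i b + b * δ i a ∈ J := by
    simpa only [Derivation.leibniz, smul_eq_mul] using hJ i _ hab
  refine hrad ⟨2, ?_⟩
  have hsq : (a * δ i b) ^ 2 = a * δ i b * (a * δ i b + b * δ i a) - a * b * (δ i a * δ i b) := by
    ring
  rw [hsq]
  exact sub_mem (Ideal.mul_mem_left _ _ hδab) (Ideal.mul_mem_right _ _ hab)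

lemma colon {J : Ideal R} (hrad : J.IsRadical) (hJ : IsDiffIdeal δ J) (b : R) :
    IsDiffIdeal δ (J.colon (Ideal.span {b})) := by
  intro i x hx
  rw [Ideal.mem_colon_span_singleton, mul_comm] at hx ⊢
  exact mul_derivation_mem hrad hJ hx i

end IsDiffIdeal

end DiffIdeal

section MaximalDisjoint

variable {ι R : Type*} [CommRing R] {δ : ι → Derivation ℤ R R}

theorem exists_le_maximal_isDiffIdeal_disjoint {S : Set R} {I : Ideal R}
    (hI : IsDiffIdeal δ I) (hIS : Disjoint (I : Set R) S) :
    ∃ m, I ≤ m ∧ Maximal (fun J : Ideal R => IsDiffIdeal δ J ∧ Disjoint (J : Set R) S) m := by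
  refine zorn_le_nonempty₀ {J : Ideal R | IsDiffIdeal δ J ∧ Disjoint (J : Set R) S}
    (fun c hc hchain J hJ => ⟨sSup c, ⟨?_, ?_⟩, fun _ => le_sSup⟩) I ⟨hI, hIS⟩
  · exact isDiffIdeal_sSup_of_directedOn (fun K hK => (hc hK).1) ⟨J, hJ⟩ hchain.directedOn
  · refine Set.disjoint_left.mpr fun x hx hxS => ?_
    obtain ⟨K, hKc, hxK⟩ := (Submodule.mem_sSup_of_directed ⟨J, hJ⟩ hchain.directedOn).mp hx
    exact Set.disjoint_left.mp (hc hKc).2 hxK hxS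

theorem IsKeigher.isPrime_of_maximal_disjoint (hK : IsKeigher δ) {S : Submonoid R}
    {m : Ideal R}
    (hm : Maximal (fun J : Ideal R => IsDiffIdeal δ J ∧ Disjoint (J : Set R) S) m) :
    m.IsPrime := by
  obtain ⟨hmδ, hmS⟩ := hm.prop
  have hrad : m.IsRadical := by
    refine hm.le_of_ge ⟨hK m hmδ, Set.disjoint_left.mpr fun x hx hxS => ?_⟩ Ideal.le_radical
    obtain ⟨n, hxn⟩ := Ideal.mem_radical_iff.mp hx
    exact Set.disjoint_left.mp hmS hxn (pow_mem hxS n)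
  have hm_le_colon (b : R) : m ≤ m.colon (Ideal.span {b}) := fun x hx =>
    Ideal.mem_colon_span_singleton.mpr (Ideal.mul_mem_right _ _ hx)
  have hcolon_meets {a b : R} (hab : a * b ∈ m) (ha : a ∉ m) : ∃ s ∈ S, s * b ∈ m := by
    by_contra! hdisj
    have hcolon : IsDiffIdeal δ (m.colon (Ideal.span {b})) ∧
        Disjoint (m.colon (Ideal.span {b}) : Set R) S :=
      ⟨IsDiffIdeal.colon hrad hmδ b, Set.disjoint_left.mpr fun s hs hsS =>
        hdisj s hsS (Ideal.mem_colon_span_singleton.mp hs)⟩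
    exact ha (hm.le_of_ge hcolon (hm_le_colon b) (Ideal.mem_colon_span_singleton.mpr hab))
  refine ⟨fun htop => Set.disjoint_left.mp hmS (htop ▸ Submodule.mem_top) S.one_mem,
    fun {x y} hxy => or_iff_not_imp_left.mpr fun hx => by_contra fun hy => ?_⟩
  obtain ⟨s, hsS, hsy⟩ := hcolon_meets hxy hx
  obtain ⟨t, htS, hts⟩ := hcolon_meets (mul_comm s y ▸ hsy) hy
  exact Set.disjoint_left.mp hmS hts (S.mul_mem htS hsS)

end MaximalDisjoint

theorem stmt4_general {ι A B : Type*} [CommRing A] [CommRing B]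
    (δA : ι → Derivation ℤ A A) (δB : ι → Derivation ℤ B B)
    (hKB : IsKeigher δB)
    (f : A →+* B) (hf : IsDiffHom δA δB f)
    (hint : f.IsIntegral) :
    HasGoingUpDiff δA δB f := by
  intro p p' _ _ hp' hp'δ hpp' q _ hqδ hqp
  let : Algebra A B := f.toAlgebra
  have : Algebra.IsIntegral A B := ⟨hint⟩
  obtain ⟨q₀, hqq₀, -, hq₀⟩ := Ideal.exists_ideal_over_prime_of_isIntegral p' q (hqp ▸ hpp')
  have hI : Disjoint ((q ⊔ p'.map f : Ideal B) : Set B) (p'.primeCompl.map f) := by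
    exact Ideal.disjoint_map_primeCompl_iff_comap_le.mpr
      ((Ideal.comap_mono (sup_le hqq₀ (Ideal.map_le_iff_le_comap.mpr hq₀.ge))).trans hq₀.le)
  obtain ⟨m, hIm, hm⟩ := exists_le_maximal_isDiffIdeal_disjoint (hqδ.sup (hp'δ.map hf)) hI
  refine ⟨m, hKB.isPrime_of_maximal_disjoint hm, hm.prop.1, le_sup_left.trans hIm, ?_⟩
  exact le_antisymm (Ideal.disjoint_map_primeCompl_iff_comap_le.mp hm.prop.2)
    (Ideal.map_le_iff_le_comap.mp (le_sup_right.trans hIm))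

/-- "going-up" for differential ideals.  If `f : A → B` is a
differential homomorphism of Keigher rings with `B` integral over `f(A)`, then `f` has
the going-up property for prime differential ideals. -/
theorem stmt4 {ι A B : Type*} [CommRing A] [CommRing B]
    (δA : ι → Derivation ℤ A A) (δB : ι → Derivation ℤ B B)
    (hKA : IsKeigher δA) (hKB : IsKeigher δB)
    (f : A →+* B) (hf : IsDiffHom δA δB f)
    (hint : f.IsIntegral) :
    HasGoingUpDiff δA δB f :=
  stmt4_general δA δB hKB f hf hint
end

section
/- Let f : A → B be a differential homomorphism of Keigher rings. Then the following are equivalent: (1) f has the going-up property for prime differential ideals; (2) the map f*_Δ : Spec^Δ B → Spec^Δ A is a closed map; (3) for every prime differential ideal 𝔮 of B, the induced map Spec^Δ(B/𝔮) → Spec^Δ(A/f⁻¹(𝔮)) is surjective. -/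
/-!
Common differential-algebra preamble.

A differential ring is a commutative ring `R` equipped with a family of derivations
`δ : ι → Derivation ℤ R R`.  Induced derivations on quotients by differential ideals
and on localizations are unique (the canonical map is an epimorphism), which justifies
quantifying universally over derivation families commuting with the canonical map.
-/

universe u v

/-!
Closed subsets of `Spec^Δ` are the sets `V(K)` with `K` a differential ideal. In a Keigher
ring a differential ideal maximal among those avoiding a multiplicative set is prime, so for a
prime differential `p ⊇ f⁻¹ K` there is a prime differential `Q ⊇ K` with `f⁻¹ Q ⊆ p`, and
going-up lifts `p` above `Q`; hence `f*_Δ (V K) = V (f⁻¹ K)` is closed. Conversely, `p ⊆ p'`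
means that `p'` is a specialization of `p`, so a closed `f*_Δ` has going-up. Condition (3) is
going-up transported along the correspondence between prime differential ideals of a quotient
`R ⧸ I` and those of `R` containing `I`.
-/

section DiffIdeal

variable {ι R : Type*} [CommRing R] {δ : ι → Derivation ℤ R R}

theorem IsDiffHom.isDiffIdeal_comap {A B : Type*} [CommRing A] [CommRing B]
    {δA : ι → Derivation ℤ A A} {δB : ι → Derivation ℤ B B} {f : A →+* B}
    (hf : IsDiffHom δA δB f) {J : Ideal B} (hJ : IsDiffIdeal δB J) :
    IsDiffIdeal δA (J.comap f) := fun i x hx => by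
  rw [Ideal.mem_comap, hf i x]
  exact hJ i _ hx

theorem IsDiffHom.isDiffIdeal_map {A B : Type*} [CommRing A] [CommRing B]
    {δA : ι → Derivation ℤ A A} {δB : ι → Derivation ℤ B B} {f : A →+* B}
    (hf : IsDiffHom δA δB f) (hsurj : Function.Surjective f) {I : Ideal A}
    (hI : IsDiffIdeal δA I) : IsDiffIdeal δB (I.map f) := fun i y hy => by
  obtain ⟨x, hx, rfl⟩ := (Ideal.mem_map_iff_of_surjective f hsurj).1 hy
  rw [← hf i x]
  exact Ideal.mem_map_of_mem f (hI i x hx)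

theorem IsDiffIdeal.exists_isDiffHom_quotientMk {I : Ideal R} (hI : IsDiffIdeal δ I) :
    ∃ δq : ι → Derivation ℤ (R ⧸ I) (R ⧸ I), IsDiffHom δ δq (Ideal.Quotient.mk I) := by
  have hker (i : ι) (x : R) (hx : (Ideal.Quotient.mk I).toIntAlgHom x = 0) :
      (Ideal.Quotient.mk I).toIntAlgHom (δ i x) = 0 :=
    Ideal.Quotient.eq_zero_iff_mem.2 (hI i x (Ideal.Quotient.eq_zero_iff_mem.1 hx))
  exact ⟨fun i => Derivation.liftOfSurjective (f := (Ideal.Quotient.mk I).toIntAlgHom)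
      Ideal.Quotient.mk_surjective (hker i),
    fun i x => (Derivation.liftOfSurjective_apply (f := (Ideal.Quotient.mk I).toIntAlgHom)
      Ideal.Quotient.mk_surjective (hker i) x).symm⟩

theorem isDiffIdeal_iInf {κ : Sort*} {J : κ → Ideal R} (hJ : ∀ k, IsDiffIdeal δ (J k)) :
    IsDiffIdeal δ (⨅ k, J k) := fun i x hx =>
  Ideal.mem_iInf.2 fun k => hJ k i x (Ideal.mem_iInf.1 hx k)

/-- `(δx · s)² = s δx · δ(xs) - xs · δx δs ∈ M`, and `M` is radical. -/
theorem IsDiffIdeal.colon_singleton {M : Ideal R} (hM : IsDiffIdeal δ M) (hrad : M.IsRadical)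
    (s : R) : IsDiffIdeal δ (M.colon {s}) := by
  intro i x hx
  rw [Submodule.mem_colon_singleton, smul_eq_mul] at hx ⊢
  have hsq : (δ i x * s) ^ 2 = (s * δ i x) * δ i (x * s) - (x * s) * (δ i x * δ i s) := by
    rw [Derivation.leibniz, smul_eq_mul, smul_eq_mul]; ring
  refine hrad ⟨2, ?_⟩
  rw [hsq]
  exact M.sub_mem (M.mul_mem_left _ (hM i _ hx)) (M.mul_mem_right _ hx)

end DiffIdeal

namespace IsKeigher

variable {ι R : Type*} [CommRing R] {δ : ι → Derivation ℤ R R}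

/-- If `ab ∈ M` with `a, b ∉ M`, the colon ideals `M : a` and then `M : t₁` are differential
ideals strictly above `M`, so they meet `T` in `t₁` and `t₂`, and then `t₂ t₁ ∈ M ∩ T`. -/
theorem isPrime_of_maximal (hK : IsKeigher δ) {T : Submonoid R} {M : Ideal R}
    (hM : Maximal (fun J : Ideal R => IsDiffIdeal δ J ∧ Disjoint (J : Set R) T) M) :
    M.IsPrime := by
  obtain ⟨hMd, hMT⟩ := hM.prop
  have hrad : M.IsRadical := by
    refine (hM.eq_of_le ⟨hK M hMd, Set.disjoint_left.2 ?_⟩ M.le_radical).symm.le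
    rintro t ⟨n, hn⟩ ht
    exact Set.disjoint_left.1 hMT hn (T.pow_mem ht n)
  have hmeet (s x : R) (hxs : x * s ∈ M) (hx : x ∉ M) : ∃ t ∈ T, t * s ∈ M := by
    by_contra! hT
    have hcolon : M = M.colon {s} := by
      refine hM.eq_of_le ⟨hMd.colon_singleton hrad s, Set.disjoint_left.2 fun t ht hts => ?_⟩
        fun y hy => ?_
      · exact hT t hts (by simpa using ht)
      · simpa using M.mul_mem_right s hy
    exact hx (hcolon ▸ by simpa using hxs)
  refine Ideal.isPrime_iff.2
    ⟨fun htop => Set.disjoint_left.1 hMT (htop ▸ Submodule.mem_top) T.one_mem,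
      fun {a b} hab => or_iff_not_imp_left.2 fun ha => by_contra fun hb => ?_⟩
  obtain ⟨t₁, ht₁, hat₁⟩ := hmeet a b (by rwa [mul_comm]) hb
  obtain ⟨t₂, ht₂, ht₁t₂⟩ := hmeet t₁ a (by rwa [mul_comm]) ha
  exact Set.disjoint_left.1 hMT ht₁t₂ (T.mul_mem ht₂ ht₁)

theorem exists_le_isPrime_disjoint (hK : IsKeigher δ) {T : Submonoid R} {I : Ideal R}
    (hI : IsDiffIdeal δ I) (hIT : Disjoint (I : Set R) T) :
    ∃ p : Ideal R, p.IsPrime ∧ IsDiffIdeal δ p ∧ I ≤ p ∧ Disjoint (p : Set R) T := by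
  have ⟨M, hIM, hM⟩ := zorn_le_nonempty₀
    {J : Ideal R | IsDiffIdeal δ J ∧ Disjoint (J : Set R) T} (fun c hc hchain J hJ => ?_) I
    ⟨hI, hIT⟩
  · exact ⟨M, hK.isPrime_of_maximal hM, hM.prop.1, hIM, hM.prop.2⟩
  have hmem (x : R) : x ∈ sSup c ↔ ∃ J ∈ c, x ∈ J :=
    Submodule.mem_sSup_of_directed ⟨J, hJ⟩ hchain.directedOn
  refine ⟨sSup c, ⟨fun i x hx => ?_, Set.disjoint_left.2 fun x hx => ?_⟩, fun _ => le_sSup⟩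
  · obtain ⟨J', hJ'c, hxJ'⟩ := (hmem x).1 hx
    exact le_sSup hJ'c ((hc hJ'c).1 i x hxJ')
  · obtain ⟨J', hJ'c, hxJ'⟩ := (hmem x).1 hx
    exact Set.disjoint_left.1 (hc hJ'c).2 hxJ'

theorem exists_le_isPrime_comap_le (hK : IsKeigher δ) {A : Type*} [CommRing A] (f : A →+* R)
    (p : Ideal A) [p.IsPrime] {K : Ideal R} (hKd : IsDiffIdeal δ K) (hKp : K.comap f ≤ p) :
    ∃ Q : Ideal R, Q.IsPrime ∧ IsDiffIdeal δ Q ∧ K ≤ Q ∧ Q.comap f ≤ p := by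
  obtain ⟨Q, hQ, hQd, hKQ, hQT⟩ := hK.exists_le_isPrime_disjoint (T := p.primeCompl.map f) hKd
    (Set.disjoint_left.2 fun _ hxK ⟨a, ha, hfa⟩ => ha (hKp (show f a ∈ K from hfa ▸ hxK)))
  exact ⟨Q, hQ, hQd, hKQ, fun a ha => by_contra fun hap =>
    Set.disjoint_left.1 hQT ha ⟨a, hap, rfl⟩⟩

end IsKeigher

namespace DiffSpec

variable {ι R : Type*} [CommRing R] (δ : ι → Derivation ℤ R R)

def zeroLocus (I : Ideal R) : Set (DiffSpec δ) := {x | I ≤ x.1.asIdeal}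

theorem isClosed_zeroLocus (I : Ideal R) : IsClosed (zeroLocus δ I) :=
  (PrimeSpectrum.isClosed_zeroLocus (I : Set R)).preimage continuous_subtype_val

theorem exists_isDiffIdeal_eq_zeroLocus {Z : Set (DiffSpec δ)} (hZ : IsClosed Z) :
    ∃ K : Ideal R, IsDiffIdeal δ K ∧ Z = zeroLocus δ K := by
  obtain ⟨C, hC, hZC⟩ := isClosed_induced_iff.1 hZ
  obtain ⟨I, rfl⟩ := (PrimeSpectrum.isClosed_iff_zeroLocus_ideal C).1 hC
  have hIZ (x : DiffSpec δ) : x ∈ Z ↔ I ≤ x.1.asIdeal := by rw [← hZC]; exact Iff.rfl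
  refine ⟨⨅ x : Z, x.1.1.asIdeal, isDiffIdeal_iInf fun x => x.1.2, Set.ext fun x =>
    ⟨fun hx => iInf_le (fun y : Z => y.1.1.asIdeal) ⟨x, hx⟩, fun hx => ?_⟩⟩
  exact (hIZ x).2 ((le_iInf fun y : Z => (hIZ y).1 y.2).trans hx)

theorem specializes_iff_le {x y : DiffSpec δ} : x ⤳ y ↔ x.1 ≤ y.1 :=
  (subtype_specializes_iff x y).trans (PrimeSpectrum.le_iff_specializes _ _).symm

end DiffSpec

section GoingUp

variable {ι A B : Type*} [CommRing A] [CommRing B]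
  {δA : ι → Derivation ℤ A A} {δB : ι → Derivation ℤ B B} {f : A →+* B}

theorem HasGoingUpDiff.image_diffComap_zeroLocus (hup : HasGoingUpDiff δA δB f)
    (hK : IsKeigher δB) (hf : IsDiffHom δA δB f) {K : Ideal B} (hKd : IsDiffIdeal δB K) :
    diffComap hf '' DiffSpec.zeroLocus δB K = DiffSpec.zeroLocus δA (K.comap f) := by
  ext p
  refine ⟨fun ⟨q, hq, hqp⟩ => hqp ▸ Ideal.comap_mono hq, fun hp => ?_⟩
  have := p.1.2
  obtain ⟨Q, hQ, hQd, hKQ, hQp⟩ := hK.exists_le_isPrime_comap_le f p.1.asIdeal hKd hp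
  obtain ⟨q, hq, hqd, hQq, hqp⟩ :=
    hup _ _ (hQ.comap f) (hf.isDiffIdeal_comap hQd) p.1.2 p.2 hQp Q hQ hQd rfl
  exact ⟨⟨⟨q, hq⟩, hqd⟩, hKQ.trans hQq, Subtype.ext (PrimeSpectrum.ext hqp)⟩

theorem HasGoingUpDiff.isClosedMap_diffComap (hup : HasGoingUpDiff δA δB f)
    (hK : IsKeigher δB) (hf : IsDiffHom δA δB f) : IsClosedMap (diffComap hf) := fun Z hZ => by
  obtain ⟨K, hKd, rfl⟩ := DiffSpec.exists_isDiffIdeal_eq_zeroLocus δB hZ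
  rw [hup.image_diffComap_zeroLocus hK hf hKd]
  exact DiffSpec.isClosed_zeroLocus δA _

/-- `p ≤ p'` says that `p'` is a specialization of `p`, so `p'` lies in the closed image of
`V(q)` as soon as `p` does. -/
theorem hasGoingUpDiff_of_isClosedMap (hf : IsDiffHom δA δB f)
    (hclosed : IsClosedMap (diffComap hf)) : HasGoingUpDiff δA δB f := by
  intro p p' hp hpd hp' hp'd hpp' q hq hqd hqp
  have hspec : (⟨⟨p, hp⟩, hpd⟩ : DiffSpec δA) ⤳ ⟨⟨p', hp'⟩, hp'd⟩ :=
    (DiffSpec.specializes_iff_le δA).2 hpp'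
  obtain ⟨q', hqq', hq'p'⟩ := hspec.mem_closed (hclosed _ (DiffSpec.isClosed_zeroLocus δB q))
    ⟨⟨⟨q, hq⟩, hqd⟩, show q ≤ q from le_rfl, Subtype.ext (PrimeSpectrum.ext hqp)⟩
  exact ⟨q'.1.asIdeal, q'.1.2, q'.2, hqq', congrArg (fun x => x.1.asIdeal) hq'p'⟩

theorem Ideal.comap_mk_comap_quotientMap (f : A →+* B) (q : Ideal B) (Q : Ideal (B ⧸ q)) :
    (Q.comap (Ideal.quotientMap q f le_rfl)).comap (Ideal.Quotient.mk (q.comap f)) =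
      (Q.comap (Ideal.Quotient.mk q)).comap f := by
  simp only [Ideal.comap_comap, Ideal.quotientMap_comp_mk]

theorem HasGoingUpDiff.exists_comap_quotientMap_eq (hup : HasGoingUpDiff δA δB f)
    (hf : IsDiffHom δA δB f) {q : Ideal B} (hq : q.IsPrime) (hqd : IsDiffIdeal δB q)
    {δAq : ι → Derivation ℤ (A ⧸ q.comap f) (A ⧸ q.comap f)}
    (hAq : IsDiffHom δA δAq (Ideal.Quotient.mk (q.comap f)))
    {δBq : ι → Derivation ℤ (B ⧸ q) (B ⧸ q)} (hBq : IsDiffHom δB δBq (Ideal.Quotient.mk q))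
    {P : Ideal (A ⧸ q.comap f)} (hP : P.IsPrime) (hPd : IsDiffIdeal δAq P) :
    ∃ Q : Ideal (B ⧸ q), Q.IsPrime ∧ IsDiffIdeal δBq Q ∧
      Q.comap (Ideal.quotientMap q f le_rfl) = P := by
  obtain ⟨q', hq', hq'd, hqq', hq'P⟩ := hup _ _ (hq.comap f) (hf.isDiffIdeal_comap hqd)
    (hP.comap _) (hAq.isDiffIdeal_comap hPd) (Ideal.mk_ker.symm.le.trans (Ideal.ker_le_comap _))
    q hq hqd rfl
  refine ⟨q'.map (Ideal.Quotient.mk q), Ideal.isPrime_map_quotientMk_of_isPrime hqq',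
    hBq.isDiffIdeal_map Ideal.Quotient.mk_surjective hq'd, ?_⟩
  apply Ideal.comap_injective_of_surjective _ Ideal.Quotient.mk_surjective
  rw [Ideal.comap_mk_comap_quotientMap, Ideal.comap_map_mk hqq', hq'P]

theorem hasGoingUpDiff_of_forall_exists_comap_quotientMap_eq (hf : IsDiffHom δA δB f)
    (h : ∀ q : Ideal B, q.IsPrime → IsDiffIdeal δB q →
      ∀ δAq : ι → Derivation ℤ (A ⧸ q.comap f) (A ⧸ q.comap f),
        IsDiffHom δA δAq (Ideal.Quotient.mk (q.comap f)) →
      ∀ δBq : ι → Derivation ℤ (B ⧸ q) (B ⧸ q), IsDiffHom δB δBq (Ideal.Quotient.mk q) →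
      ∀ P : Ideal (A ⧸ q.comap f), P.IsPrime → IsDiffIdeal δAq P →
        ∃ Q : Ideal (B ⧸ q), Q.IsPrime ∧ IsDiffIdeal δBq Q ∧
          Q.comap (Ideal.quotientMap q f le_rfl) = P) :
    HasGoingUpDiff δA δB f := by
  intro p p' _ _ hp' hp'd hpp' q hq hqd hqp
  subst hqp
  obtain ⟨δAq, hAq⟩ := (hf.isDiffIdeal_comap hqd).exists_isDiffHom_quotientMk
  obtain ⟨δBq, hBq⟩ := hqd.exists_isDiffHom_quotientMk
  obtain ⟨Q, hQ, hQd, hQP⟩ := h q hq hqd δAq hAq δBq hBq _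
    (Ideal.isPrime_map_quotientMk_of_isPrime hpp')
    (hAq.isDiffIdeal_map Ideal.Quotient.mk_surjective hp'd)
  refine ⟨Q.comap (Ideal.Quotient.mk q), hQ.comap _, hBq.isDiffIdeal_comap hQd,
    Ideal.mk_ker.symm.le.trans (Ideal.ker_le_comap _), ?_⟩
  rw [← Ideal.comap_mk_comap_quotientMap, hQP, Ideal.comap_map_mk hpp']

end GoingUp

theorem stmt12_general {ι A B : Type*} [CommRing A] [CommRing B]
    (δA : ι → Derivation ℤ A A) (δB : ι → Derivation ℤ B B)
    (hKB : IsKeigher δB)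
    (f : A →+* B) (hf : IsDiffHom δA δB f) :
    List.TFAE [
      HasGoingUpDiff δA δB f,
      IsClosedMap (diffComap hf),
      ∀ q : Ideal B, q.IsPrime → IsDiffIdeal δB q →
        ∀ δAq : ι → Derivation ℤ (A ⧸ q.comap f) (A ⧸ q.comap f),
          IsDiffHom δA δAq (Ideal.Quotient.mk (q.comap f)) →
        ∀ δBq : ι → Derivation ℤ (B ⧸ q) (B ⧸ q),
          IsDiffHom δB δBq (Ideal.Quotient.mk q) →
        ∀ P : Ideal (A ⧸ q.comap f), P.IsPrime → IsDiffIdeal δAq P →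
          ∃ Q : Ideal (B ⧸ q), Q.IsPrime ∧ IsDiffIdeal δBq Q ∧
            Q.comap (Ideal.quotientMap q f le_rfl) = P] := by
  tfae_have 1 → 2 := fun hup => hup.isClosedMap_diffComap hKB hf
  tfae_have 2 → 1 := hasGoingUpDiff_of_isClosedMap hf
  tfae_have 1 → 3 := fun hup _ hq hqd _ hAq _ hBq _ hP hPd =>
    hup.exists_comap_quotientMap_eq hf hq hqd hAq hBq hP hPd
  tfae_have 3 → 1 := hasGoingUpDiff_of_forall_exists_comap_quotientMap_eq hf
  tfae_finish

/-- For a differential homomorphism `f : A → B` of Keigher rings the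
following are equivalent: (1) `f` has the going-up property for prime differential
ideals; (2) `f*_Δ : Spec^Δ B → Spec^Δ A` is a closed map; (3) for every prime
differential ideal `q` of `B` the induced map `Spec^Δ (B/q) → Spec^Δ (A/q^c)` is
surjective (the quotients carry their unique induced derivations). -/
theorem stmt12 {ι A B : Type*} [CommRing A] [CommRing B]
    (δA : ι → Derivation ℤ A A) (δB : ι → Derivation ℤ B B)
    (hKA : IsKeigher δA) (hKB : IsKeigher δB)
    (f : A →+* B) (hf : IsDiffHom δA δB f) :
    List.TFAE [
      HasGoingUpDiff δA δB f,
      IsClosedMap (diffComap hf),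
      ∀ q : Ideal B, q.IsPrime → IsDiffIdeal δB q →
        ∀ δAq : ι → Derivation ℤ (A ⧸ q.comap f) (A ⧸ q.comap f),
          IsDiffHom δA δAq (Ideal.Quotient.mk (q.comap f)) →
        ∀ δBq : ι → Derivation ℤ (B ⧸ q) (B ⧸ q),
          IsDiffHom δB δBq (Ideal.Quotient.mk q) →
        ∀ P : Ideal (A ⧸ q.comap f), P.IsPrime → IsDiffIdeal δAq P →
          ∃ Q : Ideal (B ⧸ q), Q.IsPrime ∧ IsDiffIdeal δBq Q ∧
            Q.comap (Ideal.quotientMap q f le_rfl) = P] :=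
  stmt12_general δA δB hKB f hf
end
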